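/- arXiv:2209.04276 — 2 statements merged into one kernel-verified Lean document; each statement's English description precedes it below -/
import Mathlib

section
/- For every integer L ≥ 1: Σ_{1 ≤ i < j ≤ 2L} binom(i−1, ⌊i/2⌋) · binom(j−i−1, ⌊j/2⌋ − ⌊i/2⌋ − 1) · (1/2^j) = (L + 3/2) − (3L + 3/2) · binom(2L, L) / 4^L. -/
/-!
Summing over `i` first, the inner sum for fixed `j` splits by the parities of `i` and `j` into
convolutions of central binomial coefficients, all of which reduce to
`∑_{a + b = n} C(2a, a) C(2b, b) = 4 ^ n`. This gives `2 ^ (j - 1) - C(2k, k) / 2` with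
`k = ⌈j / 2⌉`, and the outer sum over `j ≤ 2L` is then evaluated by induction on `L` with
`(n + 1) C(2n + 2, n + 1) = 2 (2n + 1) C(2n, n)`.
-/

open Finset

/-- Binomial coefficient with integer arguments: `0` whenever `b < 0` or `b > a`. -/
def ichoose (a b : ℤ) : ℕ := if 0 ≤ b ∧ b ≤ a then Nat.choose a.toNat b.toNat else 0

open Nat

theorem two_mul_sum_antidiagonal_fst_mul {R : Type*} [CommSemiring R] (a : ℕ → R) (n : ℕ) :
    2 * ∑ p ∈ antidiagonal n, (p.1 : R) * (a p.1 * a p.2) =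
      n * ∑ p ∈ antidiagonal n, a p.1 * a p.2 := by
  have hswap : ∑ p ∈ antidiagonal n, (p.1 : R) * (a p.1 * a p.2) =
      ∑ p ∈ antidiagonal n, (p.2 : R) * (a p.1 * a p.2) := by
    rw [← Finset.Nat.sum_antidiagonal_swap]
    exact sum_congr rfl fun p _ => by simp only [Prod.fst_swap, Prod.snd_swap]; ring
  calc 2 * ∑ p ∈ antidiagonal n, (p.1 : R) * (a p.1 * a p.2)
      = ∑ p ∈ antidiagonal n, ((p.1 : R) + p.2) * (a p.1 * a p.2) := by
        rw [two_mul]; nth_rw 2 [hswap]; rw [← sum_add_distrib]; simp only [add_mul]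
    _ = n * ∑ p ∈ antidiagonal n, a p.1 * a p.2 := by
        rw [mul_sum]
        refine sum_congr rfl fun p hp => ?_
        rw [← Nat.cast_add, mem_antidiagonal.mp hp]

namespace Nat

theorem centralBinom_one : centralBinom 1 = 2 := rfl

/-- Writing `T n` for the sum, weighting its terms by `p.1` and using
`(k + 1) C(2k + 2, k + 1) = 2 (2k + 1) C(2k, k)` gives `(n + 1) T (n + 1) = 4 (n + 1) T n`. -/
theorem sum_antidiagonal_centralBinom_mul (n : ℕ) :
    ∑ p ∈ antidiagonal n, centralBinom p.1 * centralBinom p.2 = 4 ^ n := by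
  induction n with
  | zero => simp
  | succ n ih =>
    have hsym (k : ℕ) := two_mul_sum_antidiagonal_fst_mul centralBinom k
    simp only [Nat.cast_id] at hsym
    have hstep : ∀ p ∈ antidiagonal n,
        (p.1 + 1) * (centralBinom (p.1 + 1) * centralBinom p.2) =
          2 * (2 * (p.1 * (centralBinom p.1 * centralBinom p.2)) +
            centralBinom p.1 * centralBinom p.2) :=
      fun p _ => by rw [← mul_assoc, succ_mul_centralBinom_succ]; ring
    have key := hsym (n + 1)
    rw [Finset.Nat.sum_antidiagonal_succ, zero_mul, zero_add, sum_congr rfl hstep, ← mul_sum,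
      sum_add_distrib, ← mul_sum, hsym n, ih] at key
    refine Nat.eq_of_mul_eq_mul_left (by positivity : 0 < n + 1) ?_
    rw [← key]; ring

theorem sum_antidiagonal_centralBinom_succ_mul (n : ℕ) :
    ∑ p ∈ antidiagonal n, centralBinom (p.1 + 1) * centralBinom p.2 + centralBinom (n + 1) =
      4 ^ (n + 1) := by
  rw [← sum_antidiagonal_centralBinom_mul, Finset.Nat.sum_antidiagonal_succ, centralBinom_zero]
  ring

theorem sum_antidiagonal_centralBinom_mul_succ (n : ℕ) :
    ∑ p ∈ antidiagonal n, centralBinom p.1 * centralBinom (p.2 + 1) + centralBinom (n + 1) =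
      4 ^ (n + 1) := by
  rw [← sum_antidiagonal_centralBinom_mul, Finset.Nat.sum_antidiagonal_succ', centralBinom_zero]
  ring

theorem sum_antidiagonal_centralBinom_succ_mul_succ (n : ℕ) :
    ∑ p ∈ antidiagonal n, centralBinom (p.1 + 1) * centralBinom (p.2 + 1) +
      2 * centralBinom (n + 2) = 4 ^ (n + 2) := by
  rw [← sum_antidiagonal_centralBinom_succ_mul, Finset.Nat.sum_antidiagonal_succ',
    centralBinom_zero]
  ring

theorem two_mul_choose_two_mul_add_one (m : ℕ) :
    2 * (2 * m + 1).choose m = centralBinom (m + 1) := by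
  rw [centralBinom_eq_two_mul_choose, mul_add_one, choose_succ_succ', choose_symm_half]
  ring

theorem two_mul_choose_two_mul_add_two (d : ℕ) :
    2 * (2 * d + 2).choose d + 2 * centralBinom (d + 1) = centralBinom (d + 2) := by
  rw [← two_mul_choose_two_mul_add_one (d + 1), show 2 * (d + 1) + 1 = 2 * d + 2 + 1 by ring,
    choose_succ_succ', centralBinom_eq_two_mul_choose, mul_add_one]
  ring

theorem choose_pred_half_two_mul_add_one (m : ℕ) :
    (2 * m + 1 - 1).choose ((2 * m + 1) / 2) = centralBinom m := by
  rw [centralBinom_eq_two_mul_choose, Nat.add_sub_cancel, Nat.mul_add_div two_pos]; rfl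

theorem two_mul_choose_pred_half_two_mul_add_two (m : ℕ) :
    2 * (2 * m + 2 - 1).choose ((2 * m + 2) / 2) = centralBinom (m + 1) := by
  rw [show 2 * m + 2 - 1 = 2 * m + 1 by omega, show (2 * m + 2) / 2 = m + 1 by omega,
    choose_symm_half, two_mul_choose_two_mul_add_one]

end Nat

theorem ichoose_natCast (a b : ℕ) : ichoose a b = a.choose b := by
  by_cases hba : b ≤ a
  · simp [ichoose, hba]
  · simp [ichoose, hba, choose_eq_zero_of_lt (not_le.mp hba)]

theorem ichoose_of_neg {a b : ℤ} (hb : b < 0) : ichoose a b = 0 :=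
  if_neg fun h => (h.1.trans_lt hb).false

noncomputable def pairTerm (i j : ℕ) : ℝ :=
  (Nat.choose (i - 1) (i / 2) : ℝ) *
    (ichoose ((j : ℤ) - (i : ℤ) - 1) ((j : ℤ) / 2 - (i : ℤ) / 2 - 1) : ℝ)

theorem pairTerm_eq {i j a b : ℕ} (ha : (j : ℤ) - i - 1 = a)
    (hb : (j : ℤ) / 2 - i / 2 - 1 = b) :
    pairTerm i j = (i - 1).choose (i / 2) * a.choose b := by
  rw [pairTerm, ha, hb, ichoose_natCast]

section PairTermValues

variable {m d j : ℕ}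

theorem pairTerm_odd_odd (hj : j = 2 * (m + d) + 3) :
    pairTerm (2 * m + 1) j = centralBinom m * centralBinom (d + 1) / 2 := by
  rw [pairTerm_eq (a := 2 * d + 1) (b := d) (by push_cast; omega) (by push_cast; omega),
    choose_pred_half_two_mul_add_one, ← two_mul_choose_two_mul_add_one]
  push_cast; ring

theorem pairTerm_even_odd (hj : j = 2 * (m + d) + 3) :
    pairTerm (2 * m + 2) j =
      centralBinom (m + 1) * (centralBinom (d + 1) - 2 * centralBinom d) / 4 := by
  rcases d with _ | d
  · rw [pairTerm, ichoose_of_neg (by push_cast; omega)]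
    simp [centralBinom_one]
  · rw [pairTerm_eq (a := 2 * d + 2) (b := d) (by push_cast; omega) (by push_cast; omega),
      ← two_mul_choose_pred_half_two_mul_add_two, ← two_mul_choose_two_mul_add_two]
    push_cast; ring

theorem pairTerm_odd_even (hj : j = 2 * (m + d) + 2) :
    pairTerm (2 * m + 1) j = centralBinom m * centralBinom d := by
  rw [pairTerm_eq (a := 2 * d) (b := d) (by push_cast; omega) (by push_cast; omega),
    choose_pred_half_two_mul_add_one, centralBinom_eq_two_mul_choose d]

theorem pairTerm_even_even (hj : j = 2 * (m + d) + 4) :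
    pairTerm (2 * m + 2) j = centralBinom (m + 1) * centralBinom (d + 1) / 4 := by
  rw [pairTerm_eq (a := 2 * d + 1) (b := d) (by push_cast; omega) (by push_cast; omega),
    ← two_mul_choose_pred_half_two_mul_add_two, ← two_mul_choose_two_mul_add_one]
  push_cast; ring

end PairTermValues

theorem sum_Ico_one_two_mul_add_three {M : Type*} [AddCommMonoid M] (g : ℕ → M) (n : ℕ) :
    ∑ i ∈ Ico 1 (2 * n + 3), g i =
      ∑ p ∈ antidiagonal n, (g (2 * p.1 + 1) + g (2 * p.1 + 2)) := by
  induction n with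
  | zero => simp [sum_Ico_succ_top]
  | succ n ih =>
    rw [Finset.Nat.sum_antidiagonal_succ', ← ih, show 2 * (n + 1) + 3 = 2 * n + 3 + 1 + 1 by ring,
      sum_Ico_succ_top (by omega), sum_Ico_succ_top (by omega), add_assoc, add_comm]
    rfl

noncomputable def innerSum (j : ℕ) : ℝ := ∑ i ∈ Ico 1 j, pairTerm i j

theorem innerSum_two_mul_add_one (n : ℕ) :
    innerSum (2 * n + 1) = 4 ^ n - centralBinom (n + 1) / 2 := by
  rcases n with _ | n
  · simp [innerSum, centralBinom_one]
  have hsum : innerSum (2 * (n + 1) + 1) =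
      (1 / 2) * ∑ p ∈ antidiagonal n, (centralBinom p.1 * centralBinom (p.2 + 1) : ℝ) +
      (1 / 4) * ∑ p ∈ antidiagonal n, (centralBinom (p.1 + 1) * centralBinom (p.2 + 1) : ℝ) -
      (1 / 2) * ∑ p ∈ antidiagonal n, (centralBinom (p.1 + 1) * centralBinom p.2 : ℝ) := by
    rw [innerSum, show 2 * (n + 1) + 1 = 2 * n + 3 by ring, sum_Ico_one_two_mul_add_three,
      mul_sum, mul_sum, mul_sum, ← sum_add_distrib, ← sum_sub_distrib]
    refine sum_congr rfl fun p hp => ?_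
    have hp := mem_antidiagonal.mp hp
    rw [pairTerm_odd_odd (d := p.2) (by omega), pairTerm_even_odd (d := p.2) (by omega)]
    ring
  have hright : (_ : ℝ) = _ := congrArg Nat.cast (sum_antidiagonal_centralBinom_mul_succ n)
  have hleft : (_ : ℝ) = _ := congrArg Nat.cast (sum_antidiagonal_centralBinom_succ_mul n)
  have hboth : (_ : ℝ) = _ := congrArg Nat.cast (sum_antidiagonal_centralBinom_succ_mul_succ n)
  push_cast at hright hleft hboth
  rw [hsum]
  linear_combination hright / 2 + hboth / 4 - hleft / 2

theorem innerSum_two_mul_add_two (n : ℕ) :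
    innerSum (2 * n + 2) = 2 * 4 ^ n - centralBinom (n + 1) / 2 := by
  rcases n with _ | n
  · norm_num [innerSum, pairTerm, ichoose, centralBinom_one]
  have hsum : innerSum (2 * (n + 1) + 2) =
      ∑ p ∈ antidiagonal n, (centralBinom p.1 * centralBinom (p.2 + 1) : ℝ) +
      (1 / 4) * ∑ p ∈ antidiagonal n, (centralBinom (p.1 + 1) * centralBinom (p.2 + 1) : ℝ) +
      centralBinom (n + 1) := by
    rw [innerSum, show 2 * (n + 1) + 2 = 2 * n + 3 + 1 by ring, sum_Ico_succ_top (by omega),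
      sum_Ico_one_two_mul_add_three, mul_sum, ← sum_add_distrib]
    congr 1
    · refine sum_congr rfl fun p hp => ?_
      have hp := mem_antidiagonal.mp hp
      rw [pairTerm_odd_even (d := p.2 + 1) (by omega), pairTerm_even_even (d := p.2) (by omega)]
      ring
    · rw [show 2 * n + 3 = 2 * (n + 1) + 1 by ring, pairTerm_odd_even (d := 0) (by omega),
        centralBinom_zero, Nat.cast_one, mul_one]
  have hright : (_ : ℝ) = _ := congrArg Nat.cast (sum_antidiagonal_centralBinom_mul_succ n)
  have hboth : (_ : ℝ) = _ := congrArg Nat.cast (sum_antidiagonal_centralBinom_succ_mul_succ n)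
  push_cast at hright hboth
  rw [hsum]
  linear_combination hright + hboth / 4

theorem sum_range_innerSum_div_two_pow (L : ℕ) :
    ∑ j ∈ range (2 * L + 1), innerSum j / 2 ^ j =
      L + 3 / 2 - (3 * L + 3 / 2) * centralBinom L / 4 ^ L := by
  induction L with
  | zero => simp [innerSum]
  | succ L ih =>
    have hrec : (centralBinom (L + 1) : ℝ) = 2 * (2 * L + 1) * centralBinom L / (L + 1) := by
      rw [eq_div_iff (by positivity)]
      exact_mod_cast (mul_comm _ _).trans (succ_mul_centralBinom_succ L)
    have hpow : (2 : ℝ) ^ (2 * L) = 4 ^ L := by rw [pow_mul]; norm_num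
    rw [show 2 * (L + 1) + 1 = 2 * L + 1 + 1 + 1 by ring, sum_range_succ, sum_range_succ, ih,
      innerSum_two_mul_add_one, show 2 * L + 1 + 1 = 2 * L + 2 by ring, innerSum_two_mul_add_two,
      pow_succ, pow_succ, pow_succ, hpow, hrec]
    push_cast
    field_simp
    ring

theorem sum_Icc_sum_Icc_eq_sum_range_sum_Ico {M : Type*} [AddCommMonoid M] (f : ℕ → ℕ → M)
    (N : ℕ) :
    ∑ i ∈ Icc 1 N, ∑ j ∈ Icc (i + 1) N, f i j = ∑ j ∈ range (N + 1), ∑ i ∈ Ico 1 j, f i j :=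
  sum_comm' fun i j => by simp only [mem_Icc, mem_range, mem_Ico]; omega

theorem double_sum_second_moment_general (L : ℕ) :
    ∑ i ∈ Finset.Icc 1 (2 * L), ∑ j ∈ Finset.Icc (i + 1) (2 * L),
        (Nat.choose (i - 1) (i / 2) : ℝ) *
          (ichoose ((j : ℤ) - (i : ℤ) - 1) ((j : ℤ) / 2 - (i : ℤ) / 2 - 1) : ℝ) *
          (1 / 2 ^ j) =
      ((L : ℝ) + 3 / 2) - (3 * (L : ℝ) + 3 / 2) * (Nat.choose (2 * L) L : ℝ) / 4 ^ L := by
  rw [sum_Icc_sum_Icc_eq_sum_range_sum_Ico, ← centralBinom_eq_two_mul_choose,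
    ← sum_range_innerSum_div_two_pow]
  simp only [mul_one_div, ← sum_div]
  rfl

theorem double_sum_second_moment (L : ℕ) (hL : 1 ≤ L) :
    ∑ i ∈ Finset.Icc 1 (2 * L), ∑ j ∈ Finset.Icc (i + 1) (2 * L),
        (Nat.choose (i - 1) (i / 2) : ℝ) *
          (ichoose ((j : ℤ) - (i : ℤ) - 1) ((j : ℤ) / 2 - (i : ℤ) / 2 - 1) : ℝ) *
          (1 / 2 ^ j) =
      ((L : ℝ) + 3 / 2) - (3 * (L : ℝ) + 3 / 2) * (Nat.choose (2 * L) L : ℝ) / 4 ^ L :=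
  double_sum_second_moment_general L
end

section
/- For every real y with 0 ≤ y < 1, the series Σ_{L=0}^{∞} ( Σ_{i=1}^{2L} binom(i−1, ⌊i/2⌋) · (1/2^i) ) y^L converges and equals (y + 1) / ( 2(1−y)^{3/2} ) − 1 / ( 2(1−y) ). -/
/-!
The coefficient of `y ^ n` in `(1 - y) ^ (-a)` is `Ring.multichoose a n`, and
`Ring.multichoose 2⁻¹ k = C(2k, k) / 4 ^ k`. Pairing the summands `i = 2k + 1` and `i = 2k + 2`
gives `(c k + c (k + 1)) / 2` with `c = Ring.multichoose 2⁻¹`, so by Pascal's rule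
`Ring.multichoose_succ_succ` the `L`-th coefficient of the series is
`Ring.multichoose (3 / 2) L - c L / 2 - 1 / 2`. The series is therefore
`(1 - y) ^ (-3/2) - (1 - y) ^ (-1/2) / 2 - (1 - y)⁻¹ / 2`.
-/

open Finset

theorem Ring.multichoose_succ_mul {K : Type*} [Field K] [CharZero K] (r : K) (n : ℕ) :
    Ring.multichoose r (n + 1) * (n + 1) = Ring.multichoose r n * (r + n) := by
  have h := Ring.factorial_nsmul_multichoose_eq_ascPochhammer r (n + 1)
  rw [Polynomial.ascPochhammer_smeval_eq_eval, ascPochhammer_succ_eval,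
    ← Polynomial.ascPochhammer_smeval_eq_eval,
    ← Ring.factorial_nsmul_multichoose_eq_ascPochhammer, Nat.factorial_succ] at h
  simp only [nsmul_eq_mul, Nat.cast_mul, Nat.cast_succ] at h
  have hf : (n.factorial : K) ≠ 0 := by exact_mod_cast n.factorial_ne_zero
  apply mul_left_cancel₀ hf
  linear_combination h

theorem Ring.multichoose_inv_two {K : Type*} [Field K] [CharZero K] (n : ℕ) :
    Ring.multichoose (2⁻¹ : K) n = Nat.centralBinom n / 4 ^ n := by
  induction n with
  | zero => simp
  | succ n ih =>
    have hrec := Ring.multichoose_succ_mul (2⁻¹ : K) n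
    have hcb : ((n : K) + 1) * Nat.centralBinom (n + 1) = 2 * (2 * n + 1) * Nat.centralBinom n := by
      exact_mod_cast Nat.succ_mul_centralBinom_succ n
    have hn : (n : K) + 1 ≠ 0 := by exact_mod_cast n.succ_ne_zero
    rw [ih] at hrec
    apply mul_right_cancel₀ hn
    rw [hrec, div_mul_eq_mul_div (Nat.centralBinom (n + 1) : K), mul_comm _ ((n : K) + 1), hcb,
      pow_succ]
    ring

theorem Nat.centralBinom_succ_eq_two_mul_choose (n : ℕ) :
    Nat.centralBinom (n + 1) = 2 * (2 * n + 1).choose (n + 1) := by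
  rw [Nat.centralBinom_eq_two_mul_choose, Nat.mul_succ, Nat.choose_succ_succ,
    ← Nat.choose_symm_half]
  ring

theorem Real.hasSum_multichoose_mul_pow (a : ℝ) {y : ℝ} (hy : |y| < 1) :
    HasSum (fun n => Ring.multichoose a n * y ^ n) (1 / (1 - y) ^ a) := by
  have h := (Real.one_div_one_sub_rpow_hasFPowerSeriesOnBall_zero a).hasSum
    (y := y) (by simpa [enorm_eq_nnnorm, ← NNReal.coe_lt_coe] using hy)
  simpa [FormalMultilinearSeries.ofScalars_apply_eq, Ring.multichoose_eq, mul_comm] using h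

theorem sum_Icc_choose_mul_one_div_two_pow (L : ℕ) :
    ∑ i ∈ Icc 1 (2 * L), (Nat.choose (i - 1) (i / 2) : ℝ) * (1 / 2 ^ i) =
      Ring.multichoose (3 / 2 : ℝ) L - Ring.multichoose (2⁻¹ : ℝ) L / 2 - 1 / 2 := by
  induction L with
  | zero => norm_num
  | succ L ih =>
    have hodd : ((2 * L + 1 - 1).choose ((2 * L + 1) / 2) : ℝ) * (1 / 2 ^ (2 * L + 1)) =
        Ring.multichoose (2⁻¹ : ℝ) L / 2 := by
      rw [Ring.multichoose_inv_two, Nat.centralBinom_eq_two_mul_choose,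
        show 2 * L + 1 - 1 = 2 * L by omega, show (2 * L + 1) / 2 = L by omega, pow_succ, pow_mul]
      ring
    have heven : ((2 * L + 2 - 1).choose ((2 * L + 2) / 2) : ℝ) * (1 / 2 ^ (2 * L + 2)) =
        Ring.multichoose (2⁻¹ : ℝ) (L + 1) / 2 := by
      rw [Ring.multichoose_inv_two, Nat.centralBinom_succ_eq_two_mul_choose,
        show 2 * L + 2 - 1 = 2 * L + 1 by omega, show (2 * L + 2) / 2 = L + 1 by omega,
        pow_succ, pow_succ, pow_mul]
      push_cast
      ring
    have hstep : Ring.multichoose (3 / 2 : ℝ) (L + 1) =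
        Ring.multichoose (2⁻¹ : ℝ) (L + 1) + Ring.multichoose (3 / 2 : ℝ) L := by
      rw [show (3 / 2 : ℝ) = 2⁻¹ + 1 by norm_num, Ring.multichoose_succ_succ]
    rw [show 2 * (L + 1) = 2 * L + 1 + 1 by ring, sum_Icc_succ_top (by omega),
      sum_Icc_succ_top (by omega), ih, hodd, heven, hstep]
    ring

theorem hasSum_first_moment_genFun (y : ℝ) (h0 : 0 ≤ y) (h1 : y < 1) :
    HasSum
      (fun L : ℕ =>
        (∑ i ∈ Finset.Icc 1 (2 * L), (Nat.choose (i - 1) (i / 2) : ℝ) * (1 / 2 ^ i)) * y ^ L)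
      ((y + 1) / (2 * (1 - y) ^ ((3 : ℝ) / 2)) - 1 / (2 * (1 - y))) := by
  have hy : |y| < 1 := abs_lt.2 ⟨by linarith, h1⟩
  have hsum := ((Real.hasSum_multichoose_mul_pow (3 / 2) hy).sub
    ((Real.hasSum_multichoose_mul_pow 2⁻¹ hy).div_const 2)).sub
    ((hasSum_geometric_of_lt_one h0 h1).div_const 2)
  have hval : (y + 1) / (2 * (1 - y) ^ ((3 : ℝ) / 2)) - 1 / (2 * (1 - y)) =
      1 / (1 - y) ^ (3 / 2 : ℝ) - 1 / (1 - y) ^ (2⁻¹ : ℝ) / 2 - (1 - y)⁻¹ / 2 := by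
    have hu : 0 < 1 - y := by linarith
    have hs : 0 < (1 - y) ^ (2⁻¹ : ℝ) := Real.rpow_pos_of_pos hu _
    rw [show (3 / 2 : ℝ) = 1 + 2⁻¹ by norm_num, Real.rpow_add hu, Real.rpow_one]
    field_simp
    ring
  simp only [sum_Icc_choose_mul_one_div_two_pow, sub_mul, div_mul_eq_mul_div, one_mul, hval]
  exact hsum
end
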